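/- For any two n-qubit states ρ and σ, the quantum EM distance is squeezed between the trace distance and n times the trace distance: D₁(ρ,σ) ≤ D_{EM}(ρ,σ) ≤ n·D₁(ρ,σ), where D₁(ρ,σ) = ‖ρ−σ‖₁/2. -/

import Mathlib

open scoped BigOperators ComplexOrder

/-- Matrices acting on `n` qubits. -/
abbrev QMat (n : ℕ) := Matrix (Fin n → Fin 2) (Fin n → Fin 2) ℂ

/-- The trace norm (sum of the absolute values of the eigenvalues) of a Hermitian matrix. -/
noncomputable def traceNorm {n : ℕ} (X : QMat n) : ℝ :=
  if h : X.IsHermitian then ∑ i, |h.eigenvalues i| else 0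

/-- The partial trace of `X` over qubit `i` vanishes. -/
def ptraceZero {n : ℕ} (i : Fin n) (X : QMat n) : Prop :=
  ∀ a b : Fin n → Fin 2,
    ∑ v : Fin 2, X (Function.update a i v) (Function.update b i v) = 0

/-- The quantum Wasserstein-1 (earth mover's) norm, primal formulation:
`‖X‖_EM = (1/2) min { Σᵢ ‖Xᵢ‖₁ : Xᵢ Hermitian, Trᵢ Xᵢ = 0, Σᵢ Xᵢ = X }`. -/
noncomputable def emNorm {n : ℕ} (X : QMat n) : ℝ :=
  (1 / 2) * sInf { r | ∃ Xs : Fin n → QMat n,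
    (∀ i, (Xs i).IsHermitian) ∧ (∀ i, ptraceZero i (Xs i)) ∧
    (∑ i, Xs i) = X ∧ r = ∑ i, traceNorm (Xs i) }

/-- The quantum Wasserstein-1 (earth mover's) distance. -/
noncomputable def emDist {n : ℕ} (ρ σ : QMat n) : ℝ := emNorm (ρ - σ)

/-- A density matrix: positive semidefinite with unit trace. -/
def IsState {n : ℕ} (ρ : QMat n) : Prop := ρ.PosSemidef ∧ ρ.trace = 1

/-!
Lower bound: the trace norm is subadditive on Hermitian matrices, so every admissible
decomposition has `∑ ‖Xᵢ‖₁ ≥ ‖ρ - σ‖₁`. Subadditivity comes from the Jordan decomposition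
`A = A⁺ - A⁻`, which attains `‖A‖₁ = tr A⁺ + tr A⁻`, and from `‖P - Q‖₁ ≤ tr P + tr Q` for
`P, Q ≥ 0`, obtained by pairing with the sign `S` of `P - Q` and using `-1 ≤ S ≤ 1`.

Upper bound: write `ρ - σ = P - Q` with `P, Q ≥ 0`, `tr P = tr Q = t` and `‖ρ - σ‖₁ = 2t`. The
hybrids `E_k = t⁻¹ Tr_{≥k} P ⊗ Tr_{<k} Q` are positive of trace `t` and interpolate between
`E_0 = Q` and `E_n = P`. The differences `Xᵢ = E_{i+1} - E_i` telescope to `P - Q`, have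
vanishing partial trace on qubit `i` because `E_{i+1}` and `E_i` agree once qubit `i` is traced
out, and satisfy `‖Xᵢ‖₁ ≤ tr E_{i+1} + tr E_i = 2t`.
-/

namespace Matrix
variable {m 𝕜 : Type*} [Fintype m] [DecidableEq m] [RCLike 𝕜] {A P Q : Matrix m m 𝕜}

lemma IsHermitian.trace_cfc (hA : A.IsHermitian) (f : ℝ → ℝ) :
    (cfc f A).trace = ∑ i, (f (hA.eigenvalues i) : 𝕜) := by
  rw [hA.cfc_eq, IsHermitian.cfc, Unitary.conjStarAlgAut_apply, trace_mul_cycle,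
    Unitary.coe_star_mul_self, one_mul, trace_diagonal]
  rfl

open scoped MatrixOrder

lemma PosSemidef.trace_mul_nonneg (hP : P.PosSemidef) (hQ : Q.PosSemidef) :
    0 ≤ (P * Q).trace := by
  obtain ⟨C, rfl⟩ := CStarAlgebra.nonneg_iff_eq_star_mul_self.mp hP.nonneg
  rw [mul_assoc, trace_mul_comm]
  exact (hQ.mul_mul_conjTranspose_same C).trace_nonneg

lemma posSemidef_cfc {f : ℝ → ℝ} (hf : ∀ x, 0 ≤ f x) :
    (cfc f A).PosSemidef :=
  nonneg_iff_posSemidef.mp (cfc_nonneg fun x _ => hf x)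

lemma IsHermitian.sum_abs_eigenvalues_le (hA : A.IsHermitian) (hP : P.PosSemidef)
    (hQ : Q.PosSemidef) (h : A = P - Q) :
    ((∑ i, |hA.eigenvalues i| : ℝ) : 𝕜) ≤ P.trace + Q.trace := by
  let sgn : ℝ → ℝ := fun x => if 0 ≤ x then 1 else -1
  have hsgn : ContinuousOn sgn (spectrum ℝ A) := A.finite_real_spectrum.continuousOn sgn
  have hAS : (A * cfc sgn A).trace = ((∑ i, |hA.eigenvalues i| : ℝ) : 𝕜) := by
    conv_lhs => enter [1, 1]; rw [← cfc_id' ℝ A]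
    rw [← cfc_mul _ _ _ (by fun_prop) hsgn, hA.trace_cfc]
    push_cast
    congr! 2 with i
    by_cases hi : 0 ≤ hA.eigenvalues i <;> simp [sgn, hi, abs_of_nonneg, abs_of_neg, not_le.mp]
  have h₁ : (1 - cfc sgn A).PosSemidef := by
    rw [← cfc_const_one ℝ A, ← cfc_sub _ _ _ (by fun_prop) hsgn]
    exact posSemidef_cfc fun x => by by_cases hx : 0 ≤ x <;> norm_num [sgn, hx]
  have h₂ : (1 + cfc sgn A).PosSemidef := by
    rw [← cfc_const_one ℝ A, ← cfc_add _ _ _ (by fun_prop) hsgn]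
    exact posSemidef_cfc fun x => by by_cases hx : 0 ≤ x <;> norm_num [sgn, hx]
  have hsplit : P.trace + Q.trace - (A * cfc sgn A).trace
      = (P * (1 - cfc sgn A)).trace + (Q * (1 + cfc sgn A)).trace := by
    rw [h]
    simp only [sub_mul, mul_sub, mul_add, mul_one, trace_sub, trace_add]
    ring
  rw [← hAS, ← sub_nonneg, hsplit]
  exact add_nonneg (hP.trace_mul_nonneg h₁) (hQ.trace_mul_nonneg h₂)

lemma IsHermitian.exists_posSemidef_sub_eq (hA : A.IsHermitian) :
    ∃ P Q : Matrix m m 𝕜, P.PosSemidef ∧ Q.PosSemidef ∧ A = P - Q ∧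
      P.trace + Q.trace = ((∑ i, |hA.eigenvalues i| : ℝ) : 𝕜) := by
  refine ⟨cfc (·⁺) A, cfc (·⁻) A, posSemidef_cfc posPart_nonneg,
    posSemidef_cfc negPart_nonneg, ?_, ?_⟩
  · rw [← cfc_sub .., ← cfc_id' ℝ A]
    simp only [posPart_sub_negPart, cfc_id' ℝ A]
  · rw [← trace_add, ← cfc_add .., hA.trace_cfc]
    simp [posPart_add_negPart]

end Matrix

open Function in
lemma Fintype.sum_sum_update {ι d M : Type*} [DecidableEq ι] [Fintype ι] [Fintype d]
    [AddCommMonoid M] (f : (ι → d) → M) (i : ι) :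
    ∑ v, ∑ z, f (update z i v) = Fintype.card d • ∑ z, f z := by
  let e : Equiv.Perm ((ι → d) × d) :=
    Involutive.toPerm (fun p => (update p.1 i p.2, p.1 i)) fun p => by simp
  calc ∑ v, ∑ z, f (update z i v) = ∑ p : (ι → d) × d, f (e p).1 := by
        rw [Finset.sum_comm, ← Fintype.sum_prod_type']; rfl
    _ = ∑ p : (ι → d) × d, f p.1 := Equiv.sum_comp e (fun p => f p.1)
    _ = Fintype.card d • ∑ z, f z := by
        simp [Fintype.sum_prod_type, Finset.sum_const, Finset.smul_sum]

lemma Finset.piecewise_update_of_mem {ι β : Type*} [DecidableEq ι] {s : Finset ι} {i : ι}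
    {f g : ι → β} (hi : i ∈ s) (v : β) : s.piecewise f (Function.update g i v) = s.piecewise f g :=
  s.piecewise_congr (fun _ _ => rfl) fun _ hj =>
    Function.update_of_ne (ne_of_mem_of_not_mem hi hj).symm ..

namespace Matrix
open Function Finset

variable {ι d α 𝕜 : Type*} [Fintype ι] [DecidableEq ι] [Fintype d]

/-- The partial trace over the sites in `s`, kept as a matrix on all sites (constant along `s`).
Since `z` ranges over all of `ι → d`, this is `|d| ^ |sᶜ|` times `Tr_s M` tensored with the
all-ones matrix on `s`. -/
def traceOver [AddCommMonoid α] (s : Finset ι) (M : Matrix (ι → d) (ι → d) α) :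
    Matrix (ι → d) (ι → d) α :=
  of fun a b => ∑ z, M (s.piecewise z a) (s.piecewise z b)

section traceOver
variable [AddCommMonoid α] {s : Finset ι} {i : ι} (M : Matrix (ι → d) (ι → d) α)

lemma traceOver_apply (a b : ι → d) :
    traceOver s M a b = ∑ z, M (s.piecewise z a) (s.piecewise z b) := rfl

lemma traceOver_update_of_mem (hi : i ∈ s) (a b : ι → d) (v : d) :
    traceOver s M (update a i v) (update b i v) = traceOver s M a b := by
  simp only [traceOver_apply, piecewise_update_of_mem hi]

lemma sum_traceOver_update_of_notMem (hi : i ∉ s) (a b : ι → d) :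
    ∑ v, traceOver s M (update a i v) (update b i v) =
      Fintype.card d • traceOver (insert i s) M a b := by
  have hpiecewise (z c : ι → d) (v : d) :
      s.piecewise z (update c i v) = (insert i s).piecewise (update z i v) c := by
    ext j
    by_cases hj : j = i
    · subst hj; simp [hi]
    · by_cases hs : j ∈ s <;> simp [hj, hs]
  simp only [traceOver_apply, hpiecewise]
  exact Fintype.sum_sum_update
    (fun z => M ((insert i s).piecewise z a) ((insert i s).piecewise z b)) i

lemma traceOver_empty : traceOver ∅ M = Fintype.card (ι → d) • M := by
  ext a b
  simp [traceOver_apply]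

lemma traceOver_univ_apply (a b : ι → d) : traceOver univ M a b = M.trace := by
  simp [traceOver_apply, trace]

end traceOver

lemma PosSemidef.traceOver [RCLike 𝕜] [DecidableEq d] {M : Matrix (ι → d) (ι → d) 𝕜}
    (hM : M.PosSemidef) (s : Finset ι) : (Matrix.traceOver s M).PosSemidef := by
  have : Matrix.traceOver s M =
      ∑ z, M.submatrix (fun a => s.piecewise z a) (fun a => s.piecewise z a) := by
    ext a b; simp [traceOver_apply, sum_apply]
  rw [this]
  exact posSemidef_sum _ fun z _ => hM.submatrix _

section hybrid
variable [RCLike 𝕜] (s : Finset ι) (A B : Matrix (ι → d) (ι → d) 𝕜)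

/-- `Tr_s A ⊗ Tr_{sᶜ} B`, as a matrix on all sites. -/
noncomputable def hybrid : Matrix (ι → d) (ι → d) 𝕜 :=
  (Fintype.card (ι → d) : 𝕜)⁻¹ • (traceOver s A ⊙ traceOver sᶜ B)

lemma PosSemidef.hybrid [DecidableEq d] {A B : Matrix (ι → d) (ι → d) 𝕜} (hA : A.PosSemidef)
    (hB : B.PosSemidef) : (Matrix.hybrid s A B).PosSemidef :=
  ((hA.traceOver s).hadamard (hB.traceOver sᶜ)).smul (inv_nonneg_of_nonneg (Nat.cast_nonneg _))

lemma sum_hybrid_insert_update {i : ι} (hi : i ∉ s) (a b : ι → d) :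
    ∑ v, hybrid (insert i s) A B (update a i v) (update b i v) =
      ∑ v, hybrid s A B (update a i v) (update b i v) := by
  simp only [hybrid, smul_apply, hadamard_apply, smul_eq_mul, ← Finset.mul_sum,
    traceOver_update_of_mem _ (mem_insert_self i s), traceOver_update_of_mem _ (mem_compl.2 hi)]
  rw [← Finset.sum_mul, sum_traceOver_update_of_notMem _ hi,
    sum_traceOver_update_of_notMem _ (notMem_compl.2 (mem_insert_self i s)),
    insert_compl_insert hi, mul_smul_comm, smul_mul_assoc]

/-- The bijection `(a, z, w) ↦ (x, y, u)` behind `trace_hybrid`: `x` and `y` are the rows read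
by the two factors, and `u` collects the coordinates of `z` and `w` that neither of them reads. -/
def hybridTraceEquiv : (ι → d) × (ι → d) × (ι → d) ≃ (ι → d) × (ι → d) × (ι → d) where
  toFun p := (s.piecewise p.2.1 p.1, sᶜ.piecewise p.2.2 p.1, s.piecewise p.2.2 p.2.1)
  invFun q := (s.piecewise q.2.1 q.1, s.piecewise q.1 q.2.2, s.piecewise q.2.2 q.2.1)
  left_inv p := by
    ext j <;> by_cases hj : j ∈ s <;> simp [hj]
  right_inv q := by
    ext j <;> by_cases hj : j ∈ s <;> simp [hj]

variable [Nonempty d]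

lemma hybrid_empty : hybrid ∅ A B = B.trace • A := by
  ext a b
  simp [hybrid, traceOver_empty, traceOver_univ_apply, mul_comm]

lemma hybrid_univ : hybrid univ A B = A.trace • B := by
  ext a b
  simp [hybrid, traceOver_empty, traceOver_univ_apply]

lemma trace_hybrid : (hybrid s A B).trace = A.trace * B.trace := by
  have hsum : (traceOver s A ⊙ traceOver sᶜ B).trace =
      Fintype.card (ι → d) * (A.trace * B.trace) := by
    calc (traceOver s A ⊙ traceOver sᶜ B).trace
        = ∑ p : (ι → d) × (ι → d) × (ι → d),
            A (hybridTraceEquiv s p).1 (hybridTraceEquiv s p).1 *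
              B (hybridTraceEquiv s p).2.1 (hybridTraceEquiv s p).2.1 := by
          simp only [trace, diag, hadamard_apply, traceOver_apply, Finset.sum_mul_sum,
            Fintype.sum_prod_type]
          rfl
      _ = ∑ q : (ι → d) × (ι → d) × (ι → d), A q.1 q.1 * B q.2.1 q.2.1 :=
          Equiv.sum_comp (hybridTraceEquiv s) (fun q => A q.1 q.1 * B q.2.1 q.2.1)
      _ = Fintype.card (ι → d) * (A.trace * B.trace) := by
          simp only [Fintype.sum_prod_type, Finset.sum_const, Finset.card_univ, nsmul_eq_mul,
            trace, diag]
          simp_rw [Finset.sum_mul_sum, Finset.mul_sum]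
  rw [hybrid, trace_smul, hsum, smul_eq_mul, inv_mul_cancel_left₀ (by simp)]

end hybrid

end Matrix

open Matrix

lemma traceNorm_nonneg {n : ℕ} (X : QMat n) : 0 ≤ traceNorm X := by
  unfold traceNorm
  split
  · exact Finset.sum_nonneg fun i _ => abs_nonneg _
  · exact le_rfl

lemma traceNorm_sub_le {n : ℕ} {P Q : QMat n} (hP : P.PosSemidef) (hQ : Q.PosSemidef) :
    traceNorm (P - Q) ≤ (P.trace + Q.trace).re := by
  have hPQ := hP.1.sub hQ.1
  rw [traceNorm, dif_pos hPQ]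
  simpa using (Complex.le_def.mp (hPQ.sum_abs_eigenvalues_le hP hQ rfl)).1

lemma exists_traceNorm_eq {n : ℕ} {X : QMat n} (hX : X.IsHermitian) :
    ∃ P Q : QMat n, P.PosSemidef ∧ Q.PosSemidef ∧ X = P - Q ∧
      (P.trace + Q.trace).re = traceNorm X := by
  obtain ⟨P, Q, hP, hQ, hPQ, htr⟩ := hX.exists_posSemidef_sub_eq
  exact ⟨P, Q, hP, hQ, hPQ, by rw [htr, traceNorm, dif_pos hX]; exact RCLike.ofReal_re (K := ℂ) _⟩

lemma traceNorm_sum_le {n : ℕ} {ι : Type*} [Fintype ι] (X : ι → QMat n)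
    (hX : ∀ i, (X i).IsHermitian) : traceNorm (∑ i, X i) ≤ ∑ i, traceNorm (X i) := by
  choose P Q hP hQ hPQ htr using fun i => exists_traceNorm_eq (hX i)
  have hsum : ∑ i, X i = ∑ i, P i - ∑ i, Q i := by
    rw [← Finset.sum_sub_distrib]
    exact Finset.sum_congr rfl fun i _ => hPQ i
  calc traceNorm (∑ i, X i)
      ≤ ((∑ i, P i).trace + (∑ i, Q i).trace).re := hsum ▸ traceNorm_sub_le
        (posSemidef_sum _ fun i _ => hP i) (posSemidef_sum _ fun i _ => hQ i)
    _ = ∑ i, traceNorm (X i) := by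
        rw [trace_sum, trace_sum, ← Finset.sum_add_distrib, Complex.re_sum]
        exact Finset.sum_congr rfl fun i _ => htr i

def sitesFrom {n : ℕ} (k : ℕ) : Finset (Fin n) := {j | k ≤ (j : ℕ)}

lemma sitesFrom_zero {n : ℕ} : (sitesFrom 0 : Finset (Fin n)) = Finset.univ := by
  ext j; simp [sitesFrom]

lemma sitesFrom_self {n : ℕ} : (sitesFrom n : Finset (Fin n)) = ∅ := by
  ext j; simp [sitesFrom, j.isLt]

lemma notMem_sitesFrom_succ {n : ℕ} (i : Fin n) : i ∉ sitesFrom (i + 1) := by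
  simp [sitesFrom]

lemma insert_sitesFrom_succ {n : ℕ} (i : Fin n) : insert i (sitesFrom (i + 1)) = sitesFrom i := by
  ext j; simp [sitesFrom, Fin.ext_iff]; omega

lemma exists_emDecomposition {n : ℕ} {X : QMat n} (hX : X.IsHermitian) (htr : X.trace = 0) :
    ∃ Xs : Fin n → QMat n, (∀ i, (Xs i).IsHermitian) ∧ (∀ i, ptraceZero i (Xs i)) ∧
      ∑ i, Xs i = X ∧ ∑ i, traceNorm (Xs i) ≤ n * traceNorm X := by
  obtain ⟨P, Q, hP, hQ, rfl, hnorm⟩ := exists_traceNorm_eq hX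
  have hQP : Q.trace = P.trace := by rw [trace_sub, sub_eq_zero] at htr; exact htr.symm
  set E : ℕ → QMat n := fun k => P.trace⁻¹ • hybrid (sitesFrom k) P Q
  have hE (k : ℕ) : (E k).PosSemidef :=
    (hP.hybrid _ hQ).smul (inv_nonneg_of_nonneg hP.trace_nonneg)
  have htrE (k : ℕ) : (E k).trace = P.trace := by
    simp only [E, trace_smul, trace_hybrid, hQP, smul_eq_mul, ← mul_assoc, inv_mul_mul_self]
  refine ⟨fun i => E (i + 1) - E i, fun i => (hE _).1.sub (hE _).1, fun i a b => ?_, ?_, ?_⟩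
  · simp only [E, Matrix.sub_apply, Matrix.smul_apply, smul_eq_mul, Finset.sum_sub_distrib,
      ← Finset.mul_sum]
    rw [← insert_sitesFrom_succ i, sum_hybrid_insert_update _ _ _ (notMem_sitesFrom_succ i),
      sub_self]
  · rw [Fin.sum_univ_eq_sum_range (fun k => E (k + 1) - E k), Finset.sum_range_sub]
    simp only [E, sitesFrom_self, sitesFrom_zero, hybrid_empty, hybrid_univ, hQP, ← smul_sub]
    rcases eq_or_ne P.trace 0 with h | h
    · simp [hP.trace_eq_zero_iff.1 h, hQ.trace_eq_zero_iff.1 (hQP.trans h)]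
    · rw [smul_smul, inv_mul_cancel₀ h, one_smul]
  · calc ∑ i : Fin n, traceNorm (E (i + 1) - E i)
        ≤ ∑ _i : Fin n, traceNorm (P - Q) := Finset.sum_le_sum fun i _ =>
          (traceNorm_sub_le (hE _) (hE _)).trans_eq (by rw [htrE, htrE, ← hnorm, hQP])
      _ = n * traceNorm (P - Q) := by simp

lemma emNorm_le {n : ℕ} {X : QMat n} {Xs : Fin n → QMat n} (hH : ∀ i, (Xs i).IsHermitian)
    (hp : ∀ i, ptraceZero i (Xs i)) (hs : ∑ i, Xs i = X) :
    emNorm X ≤ (∑ i, traceNorm (Xs i)) / 2 := by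
  rw [emNorm, one_div, inv_mul_eq_div]
  gcongr
  refine csInf_le ⟨0, ?_⟩ ⟨Xs, hH, hp, hs, rfl⟩
  rintro _ ⟨Ys, -, -, -, rfl⟩
  exact Finset.sum_nonneg fun i _ => traceNorm_nonneg _

lemma half_traceNorm_le_emNorm {n : ℕ} {X : QMat n} {Xs : Fin n → QMat n}
    (hH : ∀ i, (Xs i).IsHermitian) (hp : ∀ i, ptraceZero i (Xs i)) (hs : ∑ i, Xs i = X) :
    traceNorm X / 2 ≤ emNorm X := by
  rw [emNorm, one_div, inv_mul_eq_div]
  gcongr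
  refine le_csInf ⟨_, Xs, hH, hp, hs, rfl⟩ ?_
  rintro _ ⟨Ys, hYs, -, rfl, rfl⟩
  exact traceNorm_sum_le Ys hYs

/-- The quantum EM distance is squeezed between the trace distance and `n` times
the trace distance: `D₁(ρ,σ) ≤ D_EM(ρ,σ) ≤ n·D₁(ρ,σ)` with `D₁(ρ,σ) = ‖ρ−σ‖₁/2`. -/
theorem traceDist_le_emDist_le (n : ℕ) (ρ σ : QMat n) (hρ : IsState ρ) (hσ : IsState σ) :
    traceNorm (ρ - σ) / 2 ≤ emDist ρ σ ∧
    emDist ρ σ ≤ (n : ℝ) * (traceNorm (ρ - σ) / 2) := by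
  obtain ⟨Xs, hH, hp, hs, hle⟩ := exists_emDecomposition (hρ.1.1.sub hσ.1.1)
    (by rw [Matrix.trace_sub, hρ.2, hσ.2, sub_self])
  exact ⟨half_traceNorm_le_emNorm hH hp hs, (emNorm_le hH hp hs).trans (by linarith)⟩
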